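/- arXiv:1305.2826 — 2 statements merged into one kernel-verified Lean document; each statement's English description precedes it below -/
import Mathlib

section
/- Let w, t, u, s ∈ Q and let 1 ≤ i, k, r, p ≤ m with i ≠ k and r ≠ p. Then the four-fold commutator [[E_{i,w}, E_{k,t}], [E_{r,u}, E_{p,s}]] is the identity automorphism of M. -/
open QuadraticMap
open scoped commutatorElement

/-- The DSER elementary orthogonal transformation `E_{i,w}` on `M = Q ⊕ P ⊕ P*`,
`P = A^m`:  `E_{i,w}(z,x,f) = (z − f(xᵢ)•w, x + ⟨w,z⟩•xᵢ − f(xᵢ)·q(w)•xᵢ, f)`. -/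
noncomputable def Eplus {A Q : Type*} [CommRing A] [AddCommGroup Q] [Module A Q]
    {m : ℕ} (q : QuadraticForm A Q) (i : Fin m) (w : Q) :
    (Q × (Fin m → A) × (Fin m → A)) ≃ₗ[A] (Q × (Fin m → A) × (Fin m → A)) where
  toFun p := (p.1 - p.2.2 i • w,
    p.2.1 + polar ⇑q w p.1 • (Pi.single i 1 : Fin m → A)
      - (p.2.2 i * q w) • (Pi.single i 1 : Fin m → A),
    p.2.2)
  invFun p := (p.1 + p.2.2 i • w,
    p.2.1 - polar ⇑q w p.1 • (Pi.single i 1 : Fin m → A)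
      - (p.2.2 i * q w) • (Pi.single i 1 : Fin m → A),
    p.2.2)
  map_add' p p' := by
    obtain ⟨z, x, f⟩ := p
    obtain ⟨z', x', f'⟩ := p'
    refine Prod.ext ?_ (Prod.ext ?_ rfl)
    · show z + z' - (f i + f' i) • w = (z - f i • w) + (z' - f' i • w)
      module
    · show x + x' + polar ⇑q w (z + z') • (Pi.single i 1 : Fin m → A)
        - ((f i + f' i) * q w) • (Pi.single i 1 : Fin m → A) = _
      rw [polar_add_right]
      show _ = (x + polar ⇑q w z • (Pi.single i 1 : Fin m → A) - (f i * q w) • (Pi.single i 1 : Fin m → A))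
        + (x' + polar ⇑q w z' • (Pi.single i 1 : Fin m → A) - (f' i * q w) • (Pi.single i 1 : Fin m → A))
      module
  map_smul' a p := by
    obtain ⟨z, x, f⟩ := p
    refine Prod.ext ?_ (Prod.ext ?_ rfl)
    · show a • z - (a • f) i • w = a • (z - f i • w)
      simp only [Pi.smul_apply, smul_eq_mul]
      module
    · show a • x + polar ⇑q w (a • z) • (Pi.single i 1 : Fin m → A)
        - ((a • f) i * q w) • (Pi.single i 1 : Fin m → A)
        = a • (x + polar ⇑q w z • (Pi.single i 1 : Fin m → A) - (f i * q w) • (Pi.single i 1 : Fin m → A))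
      rw [polar_smul_right]
      simp only [Pi.smul_apply, smul_eq_mul]
      module
  left_inv p := by
    obtain ⟨z, x, f⟩ := p
    refine Prod.ext ?_ (Prod.ext ?_ rfl)
    · show z - f i • w + f i • w = z
      module
    · show x + polar ⇑q w z • (Pi.single i 1 : Fin m → A) - (f i * q w) • (Pi.single i 1 : Fin m → A)
        - polar ⇑q w (z - f i • w) • (Pi.single i 1 : Fin m → A)
        - (f i * q w) • (Pi.single i 1 : Fin m → A) = x
      rw [polar_sub_right, polar_smul_right, polar_self]
      simp only [smul_eq_mul]
      module
  right_inv p := by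
    obtain ⟨z, x, f⟩ := p
    refine Prod.ext ?_ (Prod.ext ?_ rfl)
    · show z + f i • w - f i • w = z
      module
    · show x - polar ⇑q w z • (Pi.single i 1 : Fin m → A) - (f i * q w) • (Pi.single i 1 : Fin m → A)
        + polar ⇑q w (z + f i • w) • (Pi.single i 1 : Fin m → A)
        - (f i * q w) • (Pi.single i 1 : Fin m → A) = x
      rw [polar_add_right, polar_smul_right, polar_self]
      simp only [smul_eq_mul]
      module

/-- The DSER elementary orthogonal transformation `E*_{i,w}` on `M = Q ⊕ P ⊕ P*`:
`E*_{i,w}(z,x,f) = (z − fᵢ(x)•w, x, f + ⟨w,z⟩•fᵢ − fᵢ(x)·q(w)•fᵢ)`. -/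
noncomputable def Estar {A Q : Type*} [CommRing A] [AddCommGroup Q] [Module A Q]
    {m : ℕ} (q : QuadraticForm A Q) (i : Fin m) (w : Q) :
    (Q × (Fin m → A) × (Fin m → A)) ≃ₗ[A] (Q × (Fin m → A) × (Fin m → A)) where
  toFun p := (p.1 - p.2.1 i • w,
    p.2.1,
    p.2.2 + polar ⇑q w p.1 • (Pi.single i 1 : Fin m → A)
      - (p.2.1 i * q w) • (Pi.single i 1 : Fin m → A))
  invFun p := (p.1 + p.2.1 i • w,
    p.2.1,
    p.2.2 - polar ⇑q w p.1 • (Pi.single i 1 : Fin m → A)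
      - (p.2.1 i * q w) • (Pi.single i 1 : Fin m → A))
  map_add' p p' := by
    obtain ⟨z, x, f⟩ := p
    obtain ⟨z', x', f'⟩ := p'
    refine Prod.ext ?_ (Prod.ext rfl ?_)
    · show z + z' - (x i + x' i) • w = (z - x i • w) + (z' - x' i • w)
      module
    · show f + f' + polar ⇑q w (z + z') • (Pi.single i 1 : Fin m → A)
        - ((x i + x' i) * q w) • (Pi.single i 1 : Fin m → A) = _
      rw [polar_add_right]
      show _ = (f + polar ⇑q w z • (Pi.single i 1 : Fin m → A)
          - (x i * q w) • (Pi.single i 1 : Fin m → A))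
        + (f' + polar ⇑q w z' • (Pi.single i 1 : Fin m → A)
          - (x' i * q w) • (Pi.single i 1 : Fin m → A))
      module
  map_smul' a p := by
    obtain ⟨z, x, f⟩ := p
    refine Prod.ext ?_ (Prod.ext rfl ?_)
    · show a • z - (a • x) i • w = a • (z - x i • w)
      simp only [Pi.smul_apply, smul_eq_mul]
      module
    · show a • f + polar ⇑q w (a • z) • (Pi.single i 1 : Fin m → A)
        - ((a • x) i * q w) • (Pi.single i 1 : Fin m → A)
        = a • (f + polar ⇑q w z • (Pi.single i 1 : Fin m → A)
          - (x i * q w) • (Pi.single i 1 : Fin m → A))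
      rw [polar_smul_right]
      simp only [Pi.smul_apply, smul_eq_mul]
      module
  left_inv p := by
    obtain ⟨z, x, f⟩ := p
    refine Prod.ext ?_ (Prod.ext rfl ?_)
    · show z - x i • w + x i • w = z
      module
    · show f + polar ⇑q w z • (Pi.single i 1 : Fin m → A)
        - (x i * q w) • (Pi.single i 1 : Fin m → A)
        - polar ⇑q w (z - x i • w) • (Pi.single i 1 : Fin m → A)
        - (x i * q w) • (Pi.single i 1 : Fin m → A) = f
      rw [polar_sub_right, polar_smul_right, polar_self]
      simp only [smul_eq_mul]
      module
  right_inv p := by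
    obtain ⟨z, x, f⟩ := p
    refine Prod.ext ?_ (Prod.ext rfl ?_)
    · show z + x i • w - x i • w = z
      module
    · show f - polar ⇑q w z • (Pi.single i 1 : Fin m → A)
        - (x i * q w) • (Pi.single i 1 : Fin m → A)
        + polar ⇑q w (z + x i • w) • (Pi.single i 1 : Fin m → A)
        - (x i * q w) • (Pi.single i 1 : Fin m → A) = f
      rw [polar_add_right, polar_smul_right, polar_self]
      simp only [smul_eq_mul]
      module

/-!
The commutator `[E_{i,w}, E_{k,t}]` fixes the `Q`- and `P*`-components and adds to the
`P`-component a vector depending only on the `P*`-component, namely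
`⟨w,t⟩ • (f(xᵢ) xₖ − f(xₖ) xᵢ)`. Maps of this shape form a commutative family, so any two
such commutators commute.
-/

lemma commute_of_apply_eq_add {A Z X F : Type*} [CommRing A] [AddCommGroup Z] [Module A Z]
    [AddCommGroup X] [Module A X] [AddCommGroup F] [Module A F]
    {g h : (Z × X × F) ≃ₗ[A] (Z × X × F)} {φ ψ : F → X}
    (hg : ∀ z x f, g (z, x, f) = (z, x + φ f, f)) (hh : ∀ z x f, h (z, x, f) = (z, x + ψ f, f)) :
    Commute g h := by
  refine LinearEquiv.ext fun ⟨z, x, f⟩ => ?_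
  change g (h (z, x, f)) = h (g (z, x, f))
  rw [hh, hg, hg, hh, add_right_comm]

section Eplus

variable {A Q : Type*} [CommRing A] [AddCommGroup Q] [Module A Q] {m : ℕ}
  (q : QuadraticForm A Q)

lemma Eplus_apply (i : Fin m) (w z : Q) (x f : Fin m → A) :
    Eplus q i w (z, x, f) = (z - f i • w,
      x + polar q w z • Pi.single i 1 - (f i * q w) • Pi.single i 1, f) := rfl

lemma Eplus_inv_apply (i : Fin m) (w z : Q) (x f : Fin m → A) :
    (Eplus q i w)⁻¹ (z, x, f) = (z + f i • w,
      x - polar q w z • Pi.single i 1 - (f i * q w) • Pi.single i 1, f) := rfl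

lemma commutatorElement_Eplus_apply (i k : Fin m) (w t z : Q) (x f : Fin m → A) :
    ⁅Eplus q i w, Eplus q k t⁆ (z, x, f) =
      (z, x + polar q w t • (f i • Pi.single k 1 - f k • Pi.single i 1), f) := by
  change Eplus q i w (Eplus q k t ((Eplus q i w)⁻¹ ((Eplus q k t)⁻¹ (z, x, f)))) = _
  rw [Eplus_inv_apply, Eplus_inv_apply, Eplus_apply, Eplus_apply]
  refine Prod.ext (by module) (Prod.ext ?_ rfl)
  simp only [polar_add_right, polar_sub_right, polar_smul_right, polar_self, polar_comm _ t w,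
    smul_eq_mul, two_smul]
  module

end Eplus

theorem fourfold_commutator_EplusEplus_EplusEplus_general
    {A Q : Type*} [CommRing A] [AddCommGroup Q] [Module A Q]
    {m : ℕ} (q : QuadraticForm A Q) (i k r p : Fin m)
    (w t u s : Q) :
    ⁅⁅Eplus q i w, Eplus q k t⁆, ⁅Eplus q r u, Eplus q p s⁆⁆ = 1 :=
  commutatorElement_eq_one_iff_mul_comm.mpr <|
    commute_of_apply_eq_add (commutatorElement_Eplus_apply q i k w t)
      (commutatorElement_Eplus_apply q r p u s)

theorem fourfold_commutator_EplusEplus_EplusEplus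
    {A Q : Type*} [CommRing A] [Invertible (2 : A)] [AddCommGroup Q] [Module A Q]
    {m : ℕ} (q : QuadraticForm A Q) (i k r p : Fin m)
    (hik : i ≠ k) (hrp : r ≠ p) (w t u s : Q) :
    ⁅⁅Eplus q i w, Eplus q k t⁆, ⁅Eplus q r u, Eplus q p s⁆⁆ = 1 :=
  fourfold_commutator_EplusEplus_EplusEplus_general q i k r p w t u s
end

section
/- Let v, c, u, d ∈ Q and let 1 ≤ i, k, r, p ≤ m with i ≠ k and r ≠ p. Then the four-fold commutator [[E*_{i,v}, E*_{k,c}], [E*_{r,u}, E*_{p,d}]] is the identity automorphism of M. -/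
open QuadraticMap
open scoped commutatorElement

/-
The commutator `⁅E*_{i,v}, E*_{k,c}⁆` fixes the `Q`- and `P`-components and adds to the
`P*`-component a term depending linearly on the `P`-component alone. Such shears form an abelian
group isomorphic to `Hom(P, P*)`, so any two of them commute.
-/

section Shear

variable {A Q P F : Type*} [CommRing A] [AddCommGroup Q] [Module A Q]
  [AddCommGroup P] [Module A P] [AddCommGroup F] [Module A F]

def shear (L : P →ₗ[A] F) : (Q × P × F) ≃ₗ[A] (Q × P × F) :=
  (LinearEquiv.refl A Q).prodCongr ((LinearEquiv.refl A P).skewProd (LinearEquiv.refl A F) L)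

@[simp]
theorem shear_apply (L : P →ₗ[A] F) (z : Q) (x : P) (f : F) :
    shear L (z, x, f) = (z, x, f + L x) :=
  rfl

theorem shear_mul_shear (L₁ L₂ : P →ₗ[A] F) :
    (shear L₁ * shear L₂ : (Q × P × F) ≃ₗ[A] (Q × P × F)) = shear (L₁ + L₂) := by
  ext ⟨z, x, f⟩ <;> simp [add_assoc, add_comm (L₂ x)]

theorem commute_shear (L₁ L₂ : P →ₗ[A] F) :
    Commute (shear L₁ : (Q × P × F) ≃ₗ[A] (Q × P × F)) (shear L₂) := by
  rw [Commute, SemiconjBy, shear_mul_shear, shear_mul_shear, add_comm]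

end Shear

section Estar

variable {A Q : Type*} [CommRing A] [AddCommGroup Q] [Module A Q] {m : ℕ}

theorem Estar_apply (q : QuadraticForm A Q) (i : Fin m) (w z : Q) (x f : Fin m → A) :
    Estar q i w (z, x, f) = (z - x i • w, x,
      f + polar q w z • Pi.single i 1 - (x i * q w) • Pi.single i 1) :=
  rfl

def wedgeSingle (i k : Fin m) : (Fin m → A) →ₗ[A] (Fin m → A) :=
  (LinearMap.proj i).smulRight (Pi.single k 1) - (LinearMap.proj k).smulRight (Pi.single i 1)

theorem commutatorElement_Estar_Estar (q : QuadraticForm A Q) (i k : Fin m) (v c : Q) :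
    ⁅Estar q i v, Estar q k c⁆ = shear (polar q v c • wedgeSingle i k) := by
  rw [commutatorElement_def, mul_inv_eq_iff_eq_mul, mul_inv_eq_iff_eq_mul]
  ext ⟨z, x, f⟩ : 1
  simp only [LinearEquiv.mul_apply, Estar_apply, shear_apply, wedgeSingle, LinearMap.smul_apply,
    LinearMap.sub_apply, LinearMap.smulRight_apply, LinearMap.proj_apply]
  refine Prod.ext (by module) (Prod.ext rfl ?_)
  simp only [polar_sub_right, polar_smul_right, polar_comm q c v]
  module

end Estar

theorem fourfold_commutator_EstarEstar_EstarEstar_general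
    {A Q : Type*} [CommRing A] [AddCommGroup Q] [Module A Q]
    {m : ℕ} (q : QuadraticForm A Q) (i k r p : Fin m)
    (v c u d : Q) :
    ⁅⁅Estar q i v, Estar q k c⁆, ⁅Estar q r u, Estar q p d⁆⁆ = 1 := by
  rw [commutatorElement_Estar_Estar, commutatorElement_Estar_Estar,
    commutatorElement_eq_one_iff_commute]
  exact commute_shear _ _

theorem fourfold_commutator_EstarEstar_EstarEstar
    {A Q : Type*} [CommRing A] [Invertible (2 : A)] [AddCommGroup Q] [Module A Q]
    {m : ℕ} (q : QuadraticForm A Q) (i k r p : Fin m)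
    (hik : i ≠ k) (hrp : r ≠ p) (v c u d : Q) :
    ⁅⁅Estar q i v, Estar q k c⁆, ⁅Estar q r u, Estar q p d⁆⁆ = 1 :=
  fourfold_commutator_EstarEstar_EstarEstar_general q i k r p v c u d
end
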